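/- Let μ and ν be probability measures on ℝ with all moments finite. For any α, β ∈ {0,1}, any p ≥ 1 and any words t_1,…,t_p ∈ S, the filtered convolution satisfies (\hat{μ}⋆\hat{ν})(P^α X(t_1) P X(t_2) P ⋯ P X(t_p) P^β) = (\hat{μ}⋆\hat{ν})(X(t_1)) ⋯ (\hat{μ}⋆\hat{ν})(X(t_p)); i.e., P acts as a separator of words for the convolved functional. -/

import Mathlib

open scoped TensorProduct

/-- The two-letter alphabet `{z, w}`. -/
inductive Letter | z | w
deriving DecidableEq

/-- Words: elements of the free monoid `S = FS({z,w})`. -/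
abbrev Word := List Letter

/-- The three generators `X, X', P` of the algebra `B`. -/
inductive Gen | X | X' | P
deriving DecidableEq, BEq

/-- The free unital associative `ℂ`-algebra on the generators `X, X', P`. -/
abbrev B := FreeAlgebra ℂ Gen

/-- `X(z) = X`, `X(w) = X'`. -/
noncomputable def Xletter (l : Letter) : B :=
  FreeAlgebra.ι ℂ (match l with | .z => Gen.X | .w => Gen.X')

/-- `X(t) = X(t₁) ⋯ X(t_r)` for a word `t ∈ S`. -/
noncomputable def Xword (t : Word) : B := (t.map Xletter).prod

/-- The projection generator `P`. -/
noncomputable def Pgen : B := FreeAlgebra.ι ℂ Gen.P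

/-- Value of the functional `\hat μ` (built from the moment sequence `m`, `m 0 = 1`)
on a basis word of `B`: split the word into maximal `P`-free blocks and take the
product of `m (length of block)`. -/
def wordVal (m : ℕ → ℂ) (l : List Gen) : ℂ :=
  ((l.splitOn Gen.P).map (fun t => if t = [] then 1 else m t.length)).prod

/-- The linear functional `\hat μ : B → ℂ` associated with a moment sequence `m`. -/
noncomputable def hatL (m : ℕ → ℂ) : B →ₗ[ℂ] ℂ :=
  (Finsupp.linearCombination ℂ (fun x : FreeMonoid Gen => wordVal m (FreeMonoid.toList x))).comp
    ((MonoidAlgebra.coeffLinearEquiv ℂ : MonoidAlgebra ℂ (FreeMonoid Gen) ≃ₗ[ℂ] (FreeMonoid Gen →₀ ℂ)).toLinearMap.comp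
    (FreeAlgebra.equivMonoidAlgebraFreeMonoid : B ≃ₐ[ℂ] MonoidAlgebra ℂ (FreeMonoid Gen)).toLinearMap)

/-- The coproduct `Δ : B → B ⊗ B`, `Δ X = X⊗1 + 1⊗X`, `Δ X' = X'⊗P + P⊗X'`, `Δ P = P⊗P`. -/
noncomputable def Cop : B →ₐ[ℂ] B ⊗[ℂ] B :=
  FreeAlgebra.lift ℂ (fun g : Gen => match g with
    | .X => FreeAlgebra.ι ℂ Gen.X ⊗ₜ[ℂ] 1 + 1 ⊗ₜ[ℂ] FreeAlgebra.ι ℂ Gen.X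
    | .X' => FreeAlgebra.ι ℂ Gen.X' ⊗ₜ[ℂ] Pgen + Pgen ⊗ₜ[ℂ] FreeAlgebra.ι ℂ Gen.X'
    | .P => Pgen ⊗ₜ[ℂ] Pgen)

/-- The functional `φ ⊗ ψ` on `B ⊗ B`. -/
noncomputable def tensorFunc (φ ψ : B →ₗ[ℂ] ℂ) : B ⊗[ℂ] B →ₗ[ℂ] ℂ :=
  (LinearMap.mul' ℂ ℂ).comp (TensorProduct.map φ ψ)

/-- The filtered convolution `φ ⋆ ψ = (φ ⊗ ψ) ∘ Δ`. -/
noncomputable def filtConv (φ ψ : B →ₗ[ℂ] ℂ) : B →ₗ[ℂ] ℂ :=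
  (tensorFunc φ ψ).comp Cop.toLinearMap

/-- The `n`-th moment of a measure on `ℝ`, as a complex number. -/
noncomputable def mom (μ : MeasureTheory.Measure ℝ) (n : ℕ) : ℂ :=
  ((∫ x, x ^ n ∂μ : ℝ) : ℂ)

/-! Call a functional `φ` *separated by* `p` if `φ 1 = 1` and `φ (a p b) = φ a · φ b`. The
functional `\hat μ` is separated by `P`, because cutting a word at an occurrence of `P` cuts its
list of maximal `P`-free blocks in two. Separation passes from `φ` and `ψ` to `φ ⊗ ψ` with respect
to `P ⊗ P`, and then, since `Δ` is an algebra map with `Δ P = P ⊗ P`, to `φ ⋆ ψ`. A functional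
separated by `P` ignores powers of `P` at either end of its argument and sends
`X(t₁) P ⋯ P X(t_p)` to the product of its values on the `X(tᵢ)`. -/
namespace LinearMap

variable {R A : Type*} [CommSemiring R] [Semiring A] [Algebra R A]

structure IsSeparatedBy (φ : A →ₗ[R] R) (p : A) : Prop where
  map_one : φ 1 = 1
  map_mul_mul : ∀ a b, φ (a * p * b) = φ a * φ b

namespace IsSeparatedBy

variable {φ : A →ₗ[R] R} {p : A}

theorem map_pow_mul (h : φ.IsSeparatedBy p) (n : ℕ) (a : A) : φ (p ^ n * a) = φ a := by
  induction n with
  | zero => simp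
  | succ n ih => simpa [h.map_one, ih, pow_succ', mul_assoc] using h.map_mul_mul 1 (p ^ n * a)

theorem map_mul_pow (h : φ.IsSeparatedBy p) (n : ℕ) (a : A) : φ (a * p ^ n) = φ a := by
  induction n with
  | zero => simp
  | succ n ih => simpa [h.map_one, ih, pow_succ, mul_assoc] using h.map_mul_mul (a * p ^ n) 1

theorem map_intersperse_prod (h : φ.IsSeparatedBy p) (xs : List A) :
    φ (xs.intersperse p).prod = (xs.map φ).prod := by
  induction xs with
  | nil => simpa using h.map_one
  | cons x xs ih =>
    cases xs with
    | nil => simp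
    | cons y ys =>
      rw [List.intersperse_cons_cons, List.prod_cons, List.prod_cons, ← mul_assoc,
        h.map_mul_mul, ih, List.map_cons (a := x), List.prod_cons]

theorem comp_algHom {A' : Type*} [Semiring A'] [Algebra R A'] {τ : A' →ₗ[R] R} (f : A →ₐ[R] A')
    (h : τ.IsSeparatedBy (f p)) : (τ ∘ₗ f.toLinearMap).IsSeparatedBy p where
  map_one := by simpa using h.map_one
  map_mul_mul a b := by simpa using h.map_mul_mul (f a) (f b)

theorem tensor {A' : Type*} [Semiring A'] [Algebra R A'] {ψ : A' →ₗ[R] R} {q : A'}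
    (hφ : φ.IsSeparatedBy p) (hψ : ψ.IsSeparatedBy q) :
    (LinearMap.mul' R R ∘ₗ TensorProduct.map φ ψ).IsSeparatedBy (p ⊗ₜ q) where
  map_one := by simp [Algebra.TensorProduct.one_def, hφ.map_one, hψ.map_one]
  map_mul_mul x y := by
    induction x using TensorProduct.induction_on with
    | zero => simp
    | add x₁ x₂ h₁ h₂ => simp only [add_mul, map_add, h₁, h₂]
    | tmul a a' =>
      induction y using TensorProduct.induction_on with
      | zero => simp
      | add y₁ y₂ h₁ h₂ => simp only [mul_add, map_add, h₁, h₂]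
      | tmul b b' =>
        simp only [Algebra.TensorProduct.tmul_mul_tmul, comp_apply, TensorProduct.map_tmul,
          mul'_apply, hφ.map_mul_mul, hψ.map_mul_mul]
        ring

end IsSeparatedBy

end LinearMap

namespace FreeAlgebra

variable {R X : Type*} [CommSemiring R]

theorem basisFreeMonoid_apply (w : FreeMonoid X) :
    basisFreeMonoid R X w = equivMonoidAlgebraFreeMonoid.symm (MonoidAlgebra.single w 1) := by
  simp [basisFreeMonoid]

theorem basisFreeMonoid_mul (u v : FreeMonoid X) :
    basisFreeMonoid R X u * basisFreeMonoid R X v = basisFreeMonoid R X (u * v) := by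
  simp only [basisFreeMonoid_apply, ← map_mul, MonoidAlgebra.single_mul_single, mul_one]

theorem basisFreeMonoid_one : basisFreeMonoid R X 1 = 1 := by
  simp [basisFreeMonoid_apply, ← MonoidAlgebra.one_def]

theorem basisFreeMonoid_of (x : X) : basisFreeMonoid R X (FreeMonoid.of x) = ι R x := by
  simp [basisFreeMonoid_apply, equivMonoidAlgebraFreeMonoid]

end FreeAlgebra

theorem hatL_basisFreeMonoid (m : ℕ → ℂ) (w : FreeMonoid Gen) :
    hatL m (FreeAlgebra.basisFreeMonoid ℂ Gen w) = wordVal m w.toList := by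
  simp [hatL, FreeAlgebra.basisFreeMonoid_apply]

theorem wordVal_nil (m : ℕ → ℂ) : wordVal m [] = 1 := by
  simp [wordVal]

theorem wordVal_append_cons_P (m : ℕ → ℂ) (l₁ l₂ : List Gen) :
    wordVal m (l₁ ++ Gen.P :: l₂) = wordVal m l₁ * wordVal m l₂ := by
  simp only [wordVal, List.splitOn]
  rw [List.splitOnP_append_cons l₁ l₂ rfl, List.map_append, List.prod_append]

theorem hatL_isSeparatedBy (m : ℕ → ℂ) : (hatL m).IsSeparatedBy Pgen where
  map_one := by
    rw [← FreeAlgebra.basisFreeMonoid_one (R := ℂ), hatL_basisFreeMonoid]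
    exact wordVal_nil m
  map_mul_mul a b := by
    let e := FreeAlgebra.basisFreeMonoid ℂ Gen
    have key : ((LinearMap.mul ℂ B).compl₁₂ (LinearMap.mulRight ℂ Pgen) LinearMap.id).compr₂
        (hatL m) = (LinearMap.mul ℂ ℂ).compl₁₂ (hatL m) (hatL m) := by
      refine LinearMap.ext_basis e e fun u v => ?_
      have hP : Pgen = e (FreeMonoid.of Gen.P) := (FreeAlgebra.basisFreeMonoid_of _).symm
      simp only [LinearMap.compr₂_apply, LinearMap.compl₁₂_apply, LinearMap.mul_apply',
        LinearMap.mulRight_apply, LinearMap.id_apply, hP, e, FreeAlgebra.basisFreeMonoid_mul,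
        hatL_basisFreeMonoid, FreeMonoid.toList_mul, FreeMonoid.toList_of, List.append_assoc,
        List.singleton_append, wordVal_append_cons_P]
    exact LinearMap.congr_fun₂ key a b

theorem Cop_Pgen : Cop Pgen = Pgen ⊗ₜ[ℂ] Pgen := by
  simp [Cop, Pgen]

theorem LinearMap.IsSeparatedBy.filtConv {φ ψ : B →ₗ[ℂ] ℂ} (hφ : φ.IsSeparatedBy Pgen)
    (hψ : ψ.IsSeparatedBy Pgen) : (filtConv φ ψ).IsSeparatedBy Pgen :=
  IsSeparatedBy.comp_algHom Cop (Cop_Pgen ▸ hφ.tensor hψ)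

theorem filtConv_separator_general (μ ν : MeasureTheory.Measure ℝ)
    (α β : ℕ)
    (ts : List Word) :
    filtConv (hatL (mom μ)) (hatL (mom ν))
        (Pgen ^ α * ((ts.map Xword).intersperse Pgen).prod * Pgen ^ β) =
      (ts.map (fun t => filtConv (hatL (mom μ)) (hatL (mom ν)) (Xword t))).prod := by
  have h := (hatL_isSeparatedBy (mom μ)).filtConv (hatL_isSeparatedBy (mom ν))
  rw [h.map_mul_pow, h.map_pow_mul, h.map_intersperse_prod, List.map_map]
  rfl

/-- `P` acts as a separator of words for the filtered convolution
`\hat μ ⋆ \hat ν`. -/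
theorem filtConv_separator (μ ν : MeasureTheory.Measure ℝ)
    [MeasureTheory.IsProbabilityMeasure μ] [MeasureTheory.IsProbabilityMeasure ν]
    (hμ : ∀ n : ℕ, MeasureTheory.Integrable (fun x => x ^ n) μ)
    (hν : ∀ n : ℕ, MeasureTheory.Integrable (fun x => x ^ n) ν)
    (α β : ℕ) (hα : α ≤ 1) (hβ : β ≤ 1)
    (ts : List Word) (hts : ts ≠ []) :
    filtConv (hatL (mom μ)) (hatL (mom ν))
        (Pgen ^ α * ((ts.map Xword).intersperse Pgen).prod * Pgen ^ β) =
      (ts.map (fun t => filtConv (hatL (mom μ)) (hatL (mom ν)) (Xword t))).prod :=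
  filtConv_separator_general μ ν α β ts
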